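/- arXiv:2512.21278 — 3 statements merged into one kernel-verified Lean document; each statement's English description precedes it below -/
import Mathlib

section
/- Fix d ≥ 1. Let Q↑d = {(a₁,…,a_d) ∈ ℚ^d : a₁ < … < a_d} and let J^<_d be the structure on Q↑d with binary relations <_{ij} (ā <_{ij} b̄ iff a_i < b_j) and =_{ij} (ā =_{ij} b̄ iff a_i = b_j) for 1 ≤ i,j ≤ d. Let ≺ be a strict linear order on Q↑d that is first-order definable without parameters in J^<_d. Then there exist a permutation σ of {1,…,d} and relations R₁,…,R_d ∈ {<,>} such that for all ā, b̄ ∈ Q↑d: ā ≺ b̄ if and only if there exists j ∈ {1,…,d} with a_{σ(i)} = b_{σ(i)} for all i < j and a_{σ(j)} R_j b_{σ(j)}. -/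
open FirstOrder FirstOrder.Language

/-- The set of strictly increasing d-tuples of rationals. -/
abbrev QUp (d : ℕ) : Type := {v : Fin d → ℚ // StrictMono v}

/-- The relation symbols of `J^<_d`: for each pair `(i, j)` of coordinates, a binary symbol
`<_{ij}` (encoded by `true`) and a binary symbol `=_{ij}` (encoded by `false`). -/
def JRels (d : ℕ) : ℕ → Type
  | 2 => Fin d × Fin d × Bool
  | _ => Empty

/-- The language of `J^<_d`, with the `2d²` binary relation symbols `<_{ij}` and `=_{ij}`. -/
def JLang (d : ℕ) : FirstOrder.Language := ⟨fun _ => Empty, JRels d⟩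

/-- Interpretation of the binary relation symbols:
`u <_{ij} v` iff `u i < v j`, and `u =_{ij} v` iff `u i = v j`. -/
def jBinary {d : ℕ} (r : Fin d × Fin d × Bool) (v : Fin 2 → QUp d) : Prop :=
  if r.2.2 then (v 0).1 r.1 < (v 1).1 r.2.1 else (v 0).1 r.1 = (v 1).1 r.2.1

/-- The interpretation of the relation symbols on `QUp d`. -/
def jRelInterp (d : ℕ) : ∀ n, JRels d n → (Fin n → QUp d) → Prop
  | 0, r, _ => r.elim
  | 1, r, _ => r.elim
  | 2, r, v => jBinary r v
  | (_ + 3), r, _ => r.elim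

/-- The structure `J^<_d` on the strictly increasing d-tuples of rationals. -/
instance (d : ℕ) : (JLang d).Structure (QUp d) where
  funMap := fun f _ => f.elim
  RelMap := fun {n} r v => jRelInterp d n r v


lemma qiso_breakpoint (m c : ℚ) (hc : 0 < c) :
    ∃ f : ℚ ≃o ℚ, (∀ q, q ≤ m → f q = q) ∧ (∀ q, m < q → f q = m + c * (q - m)) := by
  set g : ℚ → ℚ := fun q => if q ≤ m then q else m + c * (q - m) with hg
  have hmono : StrictMono g := by
    intro p q hpq
    simp only [hg]
    by_cases hp : p ≤ m <;> by_cases hq : q ≤ m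
    · simpa [hp, hq] using hpq
    · simp only [hp, hq, if_true, if_false]
      push_neg at hq
      nlinarith
    · exact absurd (le_trans hpq.le hq) hp
    · simp only [hp, hq, if_false]
      push_neg at hp
      nlinarith
  have hsurj : Function.Surjective g := by
    intro z
    by_cases hz : z ≤ m
    · exact ⟨z, by simp [hg, hz]⟩
    · push_neg at hz
      refine ⟨m + (z - m) / c, ?_⟩
      have h1 : 0 < (z - m) / c := div_pos (by linarith) hc
      have h2 : ¬ (m + (z - m) / c ≤ m) := by linarith
      simp only [hg, h2, if_false]
      field_simp
      ring
  refine ⟨StrictMono.orderIsoOfSurjective g hmono hsurj, ?_, ?_⟩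
  · intro q hq
    show g q = q
    simp [hg, hq]
  · intro q hq
    show g q = m + c * (q - m)
    simp [hg, not_le.2 hq]

lemma qiso_tuples : ∀ (k : ℕ) (x y : Fin k → ℚ), StrictMono x → StrictMono y →
    ∃ f : ℚ ≃o ℚ, ∀ i, f (x i) = y i := by
  intro k
  induction k with
  | zero => exact fun x y _ _ => ⟨OrderIso.refl ℚ, fun i => i.elim0⟩
  | succ k ih =>
    intro x y hx hy
    rcases Nat.eq_zero_or_pos k with rfl | hk
    · refine ⟨(OrderIso.addRight (y 0 - x 0)), fun i => ?_⟩
      have hi : i = 0 := Fin.fin_one_eq_zero i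
      subst hi
      show x 0 + (y 0 - x 0) = y 0
      ring
    · obtain ⟨f₀, hf₀⟩ := ih (x ∘ Fin.castSucc) (y ∘ Fin.castSucc)
        (hx.comp Fin.strictMono_castSucc) (hy.comp Fin.strictMono_castSucc)
      set j : Fin k := ⟨k - 1, Nat.sub_lt hk one_pos⟩ with hjdef
      set m : ℚ := y (Fin.castSucc j) with hm
      have hjlast : Fin.castSucc j < Fin.last k := by
        simp [Fin.lt_def, hjdef]
        omega
      have ht : m < f₀ (x (Fin.last k)) := by
        have h1 : f₀ (x (Fin.castSucc j)) = m := hf₀ j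
        calc m = f₀ (x (Fin.castSucc j)) := h1.symm
        _ < f₀ (x (Fin.last k)) := f₀.strictMono (hx hjlast)
      have ht' : m < y (Fin.last k) := hy hjlast
      set t := f₀ (x (Fin.last k))
      have htm : t - m ≠ 0 := by linarith
      obtain ⟨g, hg1, hg2⟩ := qiso_breakpoint m ((y (Fin.last k) - m) / (t - m))
        (div_pos (by linarith) (by linarith))
      refine ⟨f₀.trans g, fun i => ?_⟩
      refine Fin.lastCases ?_ ?_ i
      · show g t = y (Fin.last k)
        rw [hg2 t ht, div_mul_eq_mul_div, mul_div_assoc, div_self htm, mul_one]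
        ring
      · intro i
        show g (f₀ (x (Fin.castSucc i))) = y (Fin.castSucc i)
        rw [show f₀ (x (Fin.castSucc i)) = y (Fin.castSucc i) from hf₀ i]
        exact hg1 _ (hy.monotone (by simp [Fin.le_def, hjdef]; omega))

/-- Map a QUp tuple through an order automorphism. -/
def qmap {d : ℕ} (f : ℚ ≃o ℚ) (a : QUp d) : QUp d := ⟨f ∘ a.1, f.strictMono.comp a.2⟩

/-- The automorphism of the structure J^<_d induced by an order automorphism of ℚ. -/
def jAuto {d : ℕ} (f : ℚ ≃o ℚ) : (JLang d).Equiv (QUp d) (QUp d) where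
  toEquiv := { toFun := qmap f
               invFun := qmap f.symm
               left_inv := fun a => Subtype.ext (by funext i; simp [qmap])
               right_inv := fun a => Subtype.ext (by funext i; simp [qmap]) }
  map_fun' := fun {n} F _ => F.elim
  map_rel' := by
    intro n r x
    match n, r with
    | 0, r => exact r.elim
    | 1, r => exact r.elim
    | (n+3), r => exact r.elim
    | 2, r =>
      show jBinary r _ ↔ jBinary r x
      unfold jBinary
      rcases r with ⟨i, j, b⟩
      cases b <;> simp [qmap]

lemma jAuto_realize {d : ℕ} (f : ℚ ≃o ℚ) (φ : (JLang d).Formula (Fin 2)) (a b : QUp d) :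
    φ.Realize ![qmap f a, qmap f b] ↔ φ.Realize ![a, b] := by
  have h : ![qmap f a, qmap f b] = (jAuto (d := d) f) ∘ ![a, b] := by
    funext i
    fin_cases i <;> rfl
  rw [h]
  exact StrongHomClass.realize_formula (jAuto (d := d) f) φ

/-- Pairs with the same pattern are related by an automorphism. -/
lemma pattern_iso {d : ℕ} (a b a' b' : QUp d)
    (hpat : ∀ i j, cmp (a.1 i) (b.1 j) = cmp (a'.1 i) (b'.1 j)) :
    ∃ f : ℚ ≃o ℚ, (∀ i, f (a.1 i) = a'.1 i) ∧ (∀ j, f (b.1 j) = b'.1 j) := by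
  classical
  set s : Finset ℚ := Finset.image a.1 Finset.univ ∪ Finset.image b.1 Finset.univ with hs
  set g : ℚ → ℚ := fun q =>
    if h : ∃ i, a.1 i = q then a'.1 h.choose
    else if h : ∃ j, b.1 j = q then b'.1 h.choose else q with hgdef
  have ga : ∀ i, g (a.1 i) = a'.1 i := by
    intro i
    have h : ∃ i', a.1 i' = a.1 i := ⟨i, rfl⟩
    have : h.choose = i := a.2.injective h.choose_spec
    simp only [hgdef, dif_pos h, this]
  have gb : ∀ j, g (b.1 j) = b'.1 j := by
    intro j
    by_cases h : ∃ i, a.1 i = b.1 j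
    · have h1 : a'.1 h.choose = b'.1 j := by
        have := hpat h.choose j
        rw [h.choose_spec, cmp_self_eq_eq] at this
        exact (cmp_eq_eq_iff _ _).1 this.symm
      simp only [hgdef, dif_pos h, h1]
    · have h2 : ∃ j', b.1 j' = b.1 j := ⟨j, rfl⟩
      have : h2.choose = j := b.2.injective h2.choose_spec
      simp only [hgdef, dif_neg h, dif_pos h2, this]
  have hmem : ∀ q ∈ s, (∃ i, a.1 i = q) ∨ (∃ j, b.1 j = q) := by
    intro q hq
    simp only [hs, Finset.mem_union, Finset.mem_image, Finset.mem_univ, true_and] at hq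
    exact hq
  have gmono : ∀ p ∈ s, ∀ q ∈ s, p < q → g p < g q := by
    intro p hp q hq hpq
    rcases hmem p hp with ⟨i, rfl⟩ | ⟨i, rfl⟩ <;> rcases hmem q hq with ⟨j, rfl⟩ | ⟨j, rfl⟩
    · rw [ga, ga]; exact a'.2 (a.2.lt_iff_lt.1 hpq)
    · rw [ga, gb]
      have := hpat i j
      rw [(cmp_eq_lt_iff _ _).2 hpq] at this
      exact (cmp_eq_lt_iff _ _).1 this.symm
    · rw [gb, ga]
      have := hpat j i
      rw [(cmp_eq_gt_iff _ _).2 hpq] at this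
      exact (cmp_eq_gt_iff _ _).1 this.symm
    · rw [gb, gb]; exact b'.2 (b.2.lt_iff_lt.1 hpq)
  set x : Fin s.card → ℚ := fun i => s.orderEmbOfFin rfl i with hx
  have hxmem : ∀ i, x i ∈ s := fun i => Finset.orderEmbOfFin_mem s rfl i
  have hxmono : StrictMono x := (s.orderEmbOfFin rfl).strictMono
  have hymono : StrictMono (g ∘ x) :=
    fun i j hij => gmono _ (hxmem i) _ (hxmem j) (hxmono hij)
  obtain ⟨f, hf⟩ := qiso_tuples s.card x (g ∘ x) hxmono hymono
  have hfs : ∀ q ∈ s, f q = g q := by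
    intro q hq
    have : q ∈ Set.range x := by
      rw [hx]
      show q ∈ Set.range (s.orderEmbOfFin rfl)
      rw [Finset.range_orderEmbOfFin]
      exact hq
    obtain ⟨i, rfl⟩ := this
    exact hf i
  have has : ∀ i, a.1 i ∈ s := by
    intro i; simp [hs]
  have hbs : ∀ j, b.1 j ∈ s := by
    intro j; simp [hs]
  exact ⟨f, fun i => by rw [hfs _ (has i), ga], fun j => by rw [hfs _ (hbs j), gb]⟩



/-- The "small-step" pattern associated to a comparison vector `v`. -/
def Tpat {d : ℕ} (v : Fin d → Ordering) (i j : Fin d) : Ordering :=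
  if i < j then .lt else if j < i then .gt else v i

lemma chain_exists {d : ℕ} (hd : 1 ≤ d) (a b : QUp d) :
    ∃ n : ℕ, 0 < n ∧ ∃ c : ℕ → QUp d, c 0 = a ∧ c n = b ∧
      ∀ k, k < n → ∀ i j, cmp ((c k).1 i) ((c (k+1)).1 j)
        = Tpat (fun i => cmp (a.1 i) (b.1 i)) i j := by
  classical
  have i0 : Fin d := ⟨0, hd⟩
  have hne : (Finset.univ : Finset (Fin d × Fin d)).Nonempty := ⟨(i0, i0), Finset.mem_univ _⟩
  have hne1 : (Finset.univ : Finset (Fin d)).Nonempty := ⟨i0, Finset.mem_univ _⟩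
  set γ : ℚ := Finset.univ.inf' hne (fun p =>
    if p.1 < p.2 then min (a.1 p.2 - a.1 p.1) (b.1 p.2 - b.1 p.1) else 1) with hγ
  have hγpos : 0 < γ := by
    rw [hγ, Finset.lt_inf'_iff]
    intro p _
    by_cases h : p.1 < p.2
    · simp only [h, if_true, lt_min_iff]
      exact ⟨sub_pos.2 (a.2 h), sub_pos.2 (b.2 h)⟩
    · simp [h]
  have hγle : ∀ i j : Fin d, i < j → γ ≤ min (a.1 j - a.1 i) (b.1 j - b.1 i) := by
    intro i j hij
    have := Finset.inf'_le (b := (i, j)) (fun p : Fin d × Fin d =>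
      if p.1 < p.2 then min (a.1 p.2 - a.1 p.1) (b.1 p.2 - b.1 p.1) else 1)
      (Finset.mem_univ _)
    rwa [if_pos hij] at this
  set A : ℚ := Finset.univ.sup' hne1 (fun i : Fin d => |b.1 i - a.1 i|) with hA
  have hAle : ∀ i, |b.1 i - a.1 i| ≤ A := fun i =>
    Finset.le_sup' (fun i : Fin d => |b.1 i - a.1 i|) (Finset.mem_univ i)
  have hA0 : 0 ≤ A := le_trans (abs_nonneg _) (hAle i0)
  obtain ⟨n, hn⟩ := exists_nat_gt (A / γ)
  have hn0 : 0 < n := by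
    by_contra h
    push_neg at h
    interval_cases n
    simp at hn
    nlinarith [div_nonneg hA0 hγpos.le]
  have np : (0:ℚ) < n := by exact_mod_cast hn0
  have hAn : A / n < γ := by
    rw [div_lt_iff₀ np]
    rw [div_lt_iff₀ hγpos] at hn
    nlinarith
  set t : ℕ → ℚ := fun k => ((min k n : ℕ) : ℚ) / n with htdef
  have htk : ∀ k, k ≤ n → t k = (k : ℚ) / n := by
    intro k hk
    simp only [htdef]
    rw [Nat.min_eq_left hk]
  have ht01 : ∀ k, 0 ≤ t k ∧ t k ≤ 1 := by
    intro k
    constructor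
    · exact div_nonneg (by positivity) np.le
    · rw [div_le_one np]
      exact_mod_cast Nat.min_le_right k n
  set cf : ℕ → Fin d → ℚ := fun k i => a.1 i + t k * (b.1 i - a.1 i) with hcf
  have hgap : ∀ (k : ℕ) (i j : Fin d), i < j →
      min (a.1 j - a.1 i) (b.1 j - b.1 i) ≤ cf k j - cf k i := by
    intro k i j hij
    obtain ⟨h1, h2⟩ := ht01 k
    have e : cf k j - cf k i = (1 - t k) * (a.1 j - a.1 i) + t k * (b.1 j - b.1 i) := by
      simp only [hcf]; ring
    rw [e]
    have hX : min (a.1 j - a.1 i) (b.1 j - b.1 i) ≤ a.1 j - a.1 i := min_le_left _ _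
    have hY : min (a.1 j - a.1 i) (b.1 j - b.1 i) ≤ b.1 j - b.1 i := min_le_right _ _
    nlinarith [mul_nonneg (by linarith : (0:ℚ) ≤ 1 - t k) (by linarith :
        (0:ℚ) ≤ a.1 j - a.1 i - min (a.1 j - a.1 i) (b.1 j - b.1 i)),
      mul_nonneg h1 (by linarith :
        (0:ℚ) ≤ b.1 j - b.1 i - min (a.1 j - a.1 i) (b.1 j - b.1 i))]
  have hγgap : ∀ (k : ℕ) (i j : Fin d), i < j → γ ≤ cf k j - cf k i :=
    fun k i j hij => le_trans (hγle i j hij) (hgap k i j hij)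
  have hmono : ∀ k, StrictMono (cf k) := by
    intro k i j hij
    have := hγgap k i j hij
    linarith
  set c : ℕ → QUp d := fun k => ⟨cf k, hmono k⟩ with hc
  have hstep : ∀ k, k < n → ∀ p, cf (k+1) p = cf k p + (b.1 p - a.1 p) / n := by
    intro k hk p
    have e1 : t (k+1) = t k + 1 / n := by
      rw [htk k hk.le, htk (k+1) hk]
      push_cast
      field_simp
    simp only [hcf, e1]
    ring
  refine ⟨n, hn0, c, ?_, ?_, ?_⟩
  · apply Subtype.ext
    funext i
    simp [hc, hcf, htdef]
  · apply Subtype.ext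
    funext i
    have : t n = 1 := by
      rw [htk n le_rfl, div_self np.ne']
    simp only [hc, hcf, this]
    ring
  · intro k hk i j
    have hcv : ∀ m, (c m).1 = cf m := fun _ => rfl
    rw [hcv, hcv]
    clear_value γ A t cf c
    have hAbs := abs_le.1 (hAle j)
    have hdivle : -(A / (n:ℚ)) ≤ (b.1 j - a.1 j) / n ∧ (b.1 j - a.1 j) / n ≤ A / n := by
      constructor
      · rw [← neg_div]
        exact (div_le_div_iff_of_pos_right np).2 hAbs.1
      · exact (div_le_div_iff_of_pos_right np).2 hAbs.2
    rcases lt_trichotomy i j with h | h | h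
    · have h1 : ¬ j < i := asymm h
      simp only [Tpat, if_pos h]
      rw [cmp_eq_lt_iff]
      rw [hstep k hk j]
      have := hγgap k i j h
      linarith [hdivle.1, hAn]
    · subst h
      simp only [Tpat, lt_irrefl, if_false]
      rw [hstep k hk i]
      rcases lt_trichotomy (a.1 i) (b.1 i) with h | h | h
      · rw [(cmp_eq_lt_iff _ _).2 h, cmp_eq_lt_iff]
        have : 0 < (b.1 i - a.1 i) / n := div_pos (by linarith) np
        linarith
      · rw [h, cmp_self_eq_eq, sub_self, zero_div, add_zero, cmp_self_eq_eq]
      · rw [(cmp_eq_gt_iff _ _).2 h, cmp_eq_gt_iff]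
        have : (b.1 i - a.1 i) / n < 0 := div_neg_of_neg_of_pos (by linarith) np
        linarith
    · have h1 : ¬ i < j := asymm h
      simp only [Tpat, if_neg h1, if_pos h]
      rw [cmp_eq_gt_iff]
      rw [hstep k hk j]
      have := hγgap k j i h
      linarith [hdivle.2, hAn, hγpos]


def qsh : Ordering → ℚ
  | .lt => 1/4
  | .eq => 0
  | .gt => -(1/4)

lemma qsh_abs (o : Ordering) : |qsh o| ≤ 1/4 := by
  cases o <;> norm_num [qsh, abs_le]

lemma qsh_ne_zero (o : Ordering) (h : o ≠ .eq) : qsh o ≠ 0 := by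
  cases o <;> simp_all [qsh]

lemma cmp_qsh_eq (o : Ordering) : cmp (qsh .eq) (qsh o) = o := by
  cases o
  · exact (cmp_eq_lt_iff _ _).2 (by norm_num [qsh, abs_le])
  · exact cmp_self_eq_eq _
  · exact (cmp_eq_gt_iff _ _).2 (by norm_num [qsh, abs_le])

def pert {d : ℕ} (s : Fin d → ℚ) (hs : ∀ i, |s i| ≤ 1/4) :
    {v : Fin d → ℚ // StrictMono v} :=
  ⟨fun i => ((i : ℕ) : ℚ) + s i, by
    intro i j hij
    have h1 : (i : ℕ) + 1 ≤ (j : ℕ) := hij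
    have h2 : ((i : ℕ) : ℚ) + 1 ≤ ((j : ℕ) : ℚ) := by exact_mod_cast h1
    have h3 := abs_le.1 (hs i)
    have h4 := abs_le.1 (hs j)
    show ((i : ℕ) : ℚ) + s i < ((j : ℕ) : ℚ) + s j
    linarith⟩

lemma pert_cmp {d : ℕ} (s s' : Fin d → ℚ) (hs : ∀ i, |s i| ≤ 1/4)
    (hs' : ∀ i, |s' i| ≤ 1/4) (i : Fin d) :
    cmp ((pert s hs).1 i) ((pert s' hs').1 i) = cmp (s i) (s' i) := by
  rcases lt_trichotomy (s i) (s' i) with h | h | h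
  · rw [(cmp_eq_lt_iff _ _).2 h]
    exact (cmp_eq_lt_iff _ _).2 (by show ((i:ℕ):ℚ) + s i < ((i:ℕ):ℚ) + s' i; linarith)
  · rw [h]
    rw [cmp_self_eq_eq _]
    exact (cmp_eq_eq_iff _ _).2 (by show ((i:ℕ):ℚ) + s i = ((i:ℕ):ℚ) + s' i; rw [h])
  · rw [(cmp_eq_gt_iff _ _).2 h]
    exact (cmp_eq_gt_iff _ _).2 (by show ((i:ℕ):ℚ) + s' i < ((i:ℕ):ℚ) + s i; linarith)

def Admiss (o1 o2 o3 : Ordering) : Prop :=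
  ∃ x y z : ℚ, |x| ≤ 1/4 ∧ |y| ≤ 1/4 ∧ |z| ≤ 1/4 ∧
    cmp x y = o1 ∧ cmp y z = o2 ∧ cmp x z = o3

lemma pairw (o : Ordering) : ∃ x y : ℚ, |x| ≤ 1/4 ∧ |y| ≤ 1/4 ∧ cmp x y = o := by
  cases o
  · exact ⟨0, 1/4, by norm_num [abs_le], by norm_num [abs_le], (cmp_eq_lt_iff _ _).2 (by norm_num)⟩
  · exact ⟨0, 0, by norm_num [abs_le], by norm_num [abs_le], cmp_self_eq_eq _⟩
  · exact ⟨1/4, 0, by norm_num [abs_le], by norm_num [abs_le], (cmp_eq_gt_iff _ _).2 (by norm_num)⟩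

lemma adm1 (o : Ordering) : Admiss o .eq o := by
  obtain ⟨x, y, hx, hy, h⟩ := pairw o
  exact ⟨x, y, y, hx, hy, hy, h, cmp_self_eq_eq _, h⟩

lemma adm2 (o : Ordering) : Admiss .eq o o := by
  obtain ⟨x, y, hx, hy, h⟩ := pairw o
  exact ⟨x, x, y, hx, hx, hy, cmp_self_eq_eq _, h, h⟩

lemma adm3 (o : Ordering) : Admiss o o.swap .eq := by
  obtain ⟨x, y, hx, hy, h⟩ := pairw o
  exact ⟨x, y, x, hx, hy, hx, h, by rw [← h, cmp_swap], cmp_self_eq_eq _⟩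

lemma adm5 (o : Ordering) : Admiss o o o := by
  cases o
  · exact ⟨-(1/4), 0, 1/4, by norm_num [abs_le], by norm_num [abs_le], by norm_num [abs_le],
      (cmp_eq_lt_iff _ _).2 (by norm_num), (cmp_eq_lt_iff _ _).2 (by norm_num),
      (cmp_eq_lt_iff _ _).2 (by norm_num)⟩
  · exact ⟨0, 0, 0, by norm_num [abs_le], by norm_num [abs_le], by norm_num [abs_le],
      cmp_self_eq_eq _, cmp_self_eq_eq _, cmp_self_eq_eq _⟩
  · exact ⟨1/4, 0, -(1/4), by norm_num [abs_le], by norm_num [abs_le], by norm_num [abs_le],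
      (cmp_eq_gt_iff _ _).2 (by norm_num), (cmp_eq_gt_iff _ _).2 (by norm_num),
      (cmp_eq_gt_iff _ _).2 (by norm_num)⟩

def unitO {d : ℕ} (i : Fin d) (o : Ordering) : Fin d → Ordering :=
  fun k => if k = i then o else .eq

lemma ordering_resolve : ∀ o p : Ordering, o ≠ .eq → p ≠ .eq → o ≠ p → o = p.swap := by
  intro o p h1 h2 h3
  cases o <;> cases p <;> simp_all [Ordering.swap]

lemma ordering_swap_eq_iff : ∀ o : Ordering, (o.swap = .eq ↔ o = .eq) := by
  intro o; cases o <;> simp [Ordering.swap]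

/-- Every strict linear order on `Q↑d` definable without parameters in `J^<_d` is, up to a
permutation `σ` of the coordinates and a choice of directions `R₁, …, R_d ∈ {<, >}`
(`true` encoding `<` and `false` encoding `>`), the corresponding lexicographic order. -/
theorem definable_order_is_lexicographic (d : ℕ) (hd : 1 ≤ d)
    (prec : QUp d → QUp d → Prop)
    (hirrefl : ∀ a, ¬ prec a a)
    (htrans : ∀ a b c, prec a b → prec b c → prec a c)
    (htotal : ∀ a b, a ≠ b → prec a b ∨ prec b a)
    (hdef : ∃ φ : (JLang d).Formula (Fin 2),
      ∀ a b : QUp d, prec a b ↔ φ.Realize ![a, b]) :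
    ∃ (σ : Equiv.Perm (Fin d)) (R : Fin d → Bool),
      ∀ a b : QUp d, prec a b ↔ ∃ j : Fin d,
        (∀ i, i < j → a.1 (σ i) = b.1 (σ i)) ∧
        (if R j then a.1 (σ j) < b.1 (σ j) else b.1 (σ j) < a.1 (σ j)) := by
  classical
  obtain ⟨φ, hφ⟩ := hdef
  have hinv : ∀ (f : ℚ ≃o ℚ) (a b : QUp d), prec (qmap f a) (qmap f b) ↔ prec a b := by
    intro f a b
    rw [hφ, hφ, jAuto_realize]
  have horb : ∀ a b a' b' : QUp d,
      (∀ i j, cmp (a.1 i) (b.1 j) = cmp (a'.1 i) (b'.1 j)) → (prec a b ↔ prec a' b') := by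
    intro a b a' b' hpat
    obtain ⟨f, hfa, hfb⟩ := pattern_iso a b a' b' hpat
    have ea : qmap f a = a' := Subtype.ext (funext hfa)
    have eb : qmap f b = b' := Subtype.ext (funext hfb)
    rw [← ea, ← eb, hinv]
  have hasym : ∀ a b : QUp d, prec a b → ¬ prec b a :=
    fun a b h h' => hirrefl a (htrans a b a h h')
  -- chain reduction
  have CH : ∀ (x y : QUp d), x ≠ y → ∃ p q : QUp d,
      (∀ i j, cmp (p.1 i) (q.1 j) = Tpat (fun i => cmp (x.1 i) (y.1 i)) i j) ∧
      (prec x y ↔ prec p q) := by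
    intro x y hxy
    obtain ⟨n, hn, c, hc0, hcn, hpat⟩ := chain_exists hd x y
    have hvne : ∃ i, cmp (x.1 i) (y.1 i) ≠ .eq := by
      have hne : x.1 ≠ y.1 := fun h => hxy (Subtype.ext h)
      obtain ⟨i, hi⟩ := Function.ne_iff.1 hne
      exact ⟨i, fun h => hi ((cmp_eq_eq_iff _ _).1 h)⟩
    have hdist : ∀ k, k < n → c k ≠ c (k+1) := by
      intro k hk he
      obtain ⟨i, hi⟩ := hvne
      have h2 := hpat k hk i i
      rw [he, cmp_self_eq_eq _] at h2
      simp only [Tpat, lt_irrefl, if_false] at h2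
      exact hi h2.symm
    refine ⟨c 0, c 1, hpat 0 hn, ?_⟩
    by_cases h01 : prec (c 0) (c 1)
    · have hstep : ∀ k, k < n → prec (c k) (c (k+1)) := by
        intro k hk
        exact (horb (c 0) (c 1) (c k) (c (k+1))
          (fun i j => by rw [hpat 0 hn i j, hpat k hk i j])).1 h01
      have hall : ∀ k, 1 ≤ k → k ≤ n → prec (c 0) (c k) := by
        intro k
        induction k with
        | zero => omega
        | succ k ih =>
          intro _ hk
          rcases Nat.eq_zero_or_pos k with rfl | hk0
          · exact hstep 0 hn
          · exact htrans _ _ _ (ih hk0 (by omega)) (hstep k (by omega))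
      have hfin := hall n hn le_rfl
      rw [hc0, hcn] at hfin
      exact iff_of_true hfin h01
    · have h10 : prec (c 1) (c 0) := (htotal _ _ (hdist 0 hn)).resolve_left h01
      have hstep : ∀ k, k < n → prec (c (k+1)) (c k) := by
        intro k hk
        refine (horb (c 1) (c 0) (c (k+1)) (c k) (fun i j => ?_)).1 h10
        rw [← cmp_swap, ← cmp_swap ((c k).1 j), hpat 0 hn j i, hpat k hk j i]
      have hall : ∀ k, 1 ≤ k → k ≤ n → prec (c k) (c 0) := by
        intro k
        induction k with
        | zero => omega
        | succ k ih =>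
          intro _ hk
          rcases Nat.eq_zero_or_pos k with rfl | hk0
          · exact hstep 0 hn
          · exact htrans _ _ _ (hstep k (by omega)) (ih hk0 (by omega))
      have hfin := hall n hn le_rfl
      rw [hc0, hcn] at hfin
      exact iff_of_false (fun h => hasym _ _ h hfin) h01
  -- prec depends only on the comparison vector
  have L1 : ∀ a b a' b' : QUp d,
      (∀ i, cmp (a.1 i) (b.1 i) = cmp (a'.1 i) (b'.1 i)) → (prec a b ↔ prec a' b') := by
    intro a b a' b' h
    by_cases hab : a = b
    · subst hab
      have he : a' = b' := Subtype.ext (funext fun i =>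
        (cmp_eq_eq_iff _ _).1 ((h i).symm.trans (cmp_self_eq_eq _)))
      exact iff_of_false (hirrefl a) (he ▸ hirrefl a')
    · have hab' : a' ≠ b' := by
        intro he
        apply hab
        apply Subtype.ext; funext i
        have h2 := h i
        rw [he, cmp_self_eq_eq _] at h2
        exact (cmp_eq_eq_iff _ _).1 h2
      obtain ⟨p, q, hpq, hiff⟩ := CH a b hab
      obtain ⟨p', q', hpq', hiff'⟩ := CH a' b' hab'
      rw [hiff, hiff']
      apply horb
      intro i j
      rw [hpq i j, hpq' i j]
      unfold Tpat
      split_ifs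
      · rfl
      · rfl
      · exact h i
  -- canonical realizations
  set dv : (Fin d → Ordering) → QUp d :=
    fun v => pert (fun i => qsh (v i)) (fun i => qsh_abs _) with hdv
  set Fv : (Fin d → Ordering) → Prop := fun v => prec (dv fun _ => .eq) (dv v) with hFvdef
  have hcmp_dv : ∀ (v w : Fin d → Ordering) (i : Fin d),
      cmp ((dv v).1 i) ((dv w).1 i) = cmp (qsh (v i)) (qsh (w i)) :=
    fun v w i => pert_cmp _ _ _ _ i
  have keyFv : ∀ a b : QUp d, prec a b ↔ Fv (fun i => cmp (a.1 i) (b.1 i)) := by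
    intro a b
    show prec a b ↔ prec (dv fun _ => .eq) (dv fun i => cmp (a.1 i) (b.1 i))
    exact L1 _ _ _ _ (fun i => by rw [hcmp_dv, cmp_qsh_eq])
  have F2 : ∀ u v w : Fin d → Ordering,
      (∀ i, Admiss (v i) (w i) (u i)) → Fv v → Fv w → Fv u := by
    intro u v w hadm hv hw
    choose xx yy zz hx hy hz h1 h2 h3 using hadm
    have hab : prec (pert xx hx) (pert yy hy) := by
      rw [keyFv]
      have he : (fun i => cmp ((pert xx hx).1 i) ((pert yy hy).1 i)) = v :=
        funext fun i => by rw [pert_cmp]; exact h1 i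
      rw [he]; exact hv
    have hbc : prec (pert yy hy) (pert zz hz) := by
      rw [keyFv]
      have he : (fun i => cmp ((pert yy hy).1 i) ((pert zz hz).1 i)) = w :=
        funext fun i => by rw [pert_cmp]; exact h2 i
      rw [he]; exact hw
    have hac := htrans _ _ _ hab hbc
    rw [keyFv] at hac
    have he : (fun i => cmp ((pert xx hx).1 i) ((pert zz hz).1 i)) = u :=
      funext fun i => by rw [pert_cmp]; exact h3 i
    rwa [he] at hac
  have F1 : ∀ v : Fin d → Ordering, (∃ i, v i ≠ .eq) →
      (Fv (fun i => (v i).swap) ↔ ¬ Fv v) := by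
    intro v hv
    have hne : dv (fun _ => .eq) ≠ dv v := by
      obtain ⟨i, hi⟩ := hv
      intro he
      have h1 : (dv (fun _ => .eq)).1 i = (dv v).1 i := by rw [he]
      have h3 : ((i:ℕ):ℚ) + qsh .eq = ((i:ℕ):ℚ) + qsh (v i) := h1
      have h4 : qsh (v i) = 0 := by
        have h0 : qsh Ordering.eq = (0:ℚ) := rfl
        linarith
      exact qsh_ne_zero (v i) hi h4
    have hL : Fv (fun i => (v i).swap) ↔ prec (dv v) (dv (fun _ => .eq)) := by
      show prec (dv fun _ => .eq) (dv fun i => (v i).swap) ↔ prec (dv v) (dv fun _ => .eq)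
      exact L1 _ _ _ _ (fun i => by
        rw [hcmp_dv, hcmp_dv, cmp_qsh_eq, ← cmp_swap, cmp_qsh_eq])
    rw [hL]
    show prec (dv v) (dv fun _ => .eq) ↔ ¬ prec (dv fun _ => .eq) (dv v)
    constructor
    · intro h hcon; exact hasym _ _ hcon h
    · intro h; exact (htotal _ _ hne).resolve_left h
  -- directions
  set R : Fin d → Bool := fun i => decide (Fv (unitO i .lt)) with hRdef
  set dirO : Fin d → Ordering := fun i => if R i then Ordering.lt else Ordering.gt with hdirdef
  have hdir_ne : ∀ i, dirO i ≠ .eq := by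
    intro i
    simp only [hdirdef]
    split_ifs <;> simp
  have hunit_swap : ∀ (i : Fin d) (o : Ordering),
      (fun k => (unitO i o k).swap) = unitO i o.swap := by
    intro i o
    funext k
    simp only [unitO]
    split_ifs <;> rfl
  have hFdir : ∀ i, Fv (unitO i (dirO i)) := by
    intro i
    cases hb : R i with
    | true =>
      have hd1 : dirO i = .lt := by simp [hdirdef, hb]
      rw [hd1]
      simp only [hRdef] at hb
      exact of_decide_eq_true hb
    | false =>
      have hnot : ¬ Fv (unitO i .lt) := by
        simp only [hRdef] at hb
        exact of_decide_eq_false hb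
      have hd1 : dirO i = .gt := by simp [hdirdef, hb]
      rw [hd1]
      have h2 : unitO i Ordering.gt = fun k => (unitO i Ordering.lt k).swap := by
        rw [hunit_swap]
        rfl
      rw [h2]
      exact (F1 (unitO i .lt) ⟨i, by simp [unitO]⟩).2 hnot
  have hFiff : ∀ (i : Fin d) (o : Ordering), o ≠ .eq →
      (Fv (unitO i o) ↔ o = dirO i) := by
    intro i o ho
    by_cases heq : o = dirO i
    · rw [heq]; exact iff_of_true (hFdir i) rfl
    · have hswp : o = (dirO i).swap := ordering_resolve o (dirO i) ho (hdir_ne i) heq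
      have h1 : unitO i o = fun k => (unitO i (dirO i) k).swap := by
        rw [hunit_swap, ← hswp]
      rw [h1, F1 (unitO i (dirO i)) ⟨i, by simp [unitO]; exact hdir_ne i⟩]
      exact iff_of_false (fun h => h (hFdir i)) heq
  -- the priority relation
  set wv : Fin d → Fin d → (Fin d → Ordering) :=
    fun i j k => if k = i then dirO i else if k = j then (dirO j).swap else .eq with hwvdef
  set Beats : Fin d → Fin d → Prop := fun i j => Fv (wv i j) with hBdef
  have hwv_swap : ∀ i j : Fin d, i ≠ j → (fun k => (wv i j k).swap) = wv j i := by
    intro i j hij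
    funext k
    simp only [hwvdef]
    by_cases h1 : k = i
    · subst h1
      simp [hij]
    · by_cases h2 : k = j
      · subst h2
        simp [h1, Ordering.swap_swap]
      · simp [h1, h2, Ordering.swap]
  have hBtot : ∀ i j : Fin d, i ≠ j → (Beats j i ↔ ¬ Beats i j) := by
    intro i j hij
    show Fv (wv j i) ↔ ¬ Fv (wv i j)
    rw [← hwv_swap i j hij]
    refine F1 (wv i j) ⟨i, ?_⟩
    simp only [hwvdef, if_pos rfl]
    exact hdir_ne i
  have hBtrans : ∀ i j k : Fin d, i ≠ j → j ≠ k → i ≠ k →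
      Beats i j → Beats j k → Beats i k := by
    intro i j k hij hjk hik h1 h2
    refine F2 (wv i k) (wv i j) (wv j k) (fun l => ?_) h1 h2
    by_cases hli : l = i
    · subst hli
      simp only [hwvdef, if_pos rfl, if_neg hij, if_neg hik]
      exact adm1 _
    · by_cases hlj : l = j
      · subst hlj
        simp only [hwvdef, if_neg hli, if_pos rfl, if_neg hjk]
        have h3 := adm3 ((dirO l).swap)
        rwa [Ordering.swap_swap] at h3
      · by_cases hlk : l = k
        · subst hlk
          simp only [hwvdef, if_neg hli, if_neg hlj, if_pos rfl]
          exact adm2 _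
        · simp only [hwvdef, if_neg hli, if_neg hlj, if_neg hlk]
          exact adm1 _
  -- main induction
  have hstepF : ∀ N : ℕ, ∀ v : Fin d → Ordering,
      (Finset.univ.filter (fun i => v i ≠ Ordering.eq)).card ≤ N →
      ∀ m, v m ≠ .eq → (∀ k, v k ≠ .eq → k ≠ m → Beats m k) → v m = dirO m → Fv v := by
    intro N
    induction N with
    | zero =>
      intro v hcard m hm _ _
      exfalso
      have hmem : m ∈ Finset.univ.filter (fun i => v i ≠ Ordering.eq) := by simp [hm]
      have := Finset.card_pos.2 ⟨m, hmem⟩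
      omega
    | succ N ih =>
      intro v hcard m hm hbeats hvm
      by_cases hone : ∀ k, v k ≠ Ordering.eq → k = m
      · have hvu : v = unitO m (dirO m) := by
          funext k
          by_cases hk : k = m
          · subst hk
            simp only [unitO, if_pos rfl]
            exact hvm
          · have hke : v k = .eq := by
              by_contra h
              exact hk (hone k h)
            simp [unitO, hk, hke]
        rw [hvu]
        exact hFdir m
      · push_neg at hone
        obtain ⟨j, hj, hjm⟩ := hone
        set v1 : Fin d → Ordering := Function.update v j Ordering.eq with hv1
        have hfe : Finset.univ.filter (fun i => v1 i ≠ Ordering.eq)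
            = (Finset.univ.filter (fun i => v i ≠ Ordering.eq)).erase j := by
          ext k
          simp only [Finset.mem_erase, Finset.mem_filter, Finset.mem_univ, true_and]
          by_cases hk : k = j
          · subst hk
            simp [hv1, Function.update_self]
          · simp [hv1, Function.update_of_ne hk, hk]
        have hcard1 : (Finset.univ.filter (fun i => v1 i ≠ Ordering.eq)).card ≤ N := by
          rw [hfe, Finset.card_erase_of_mem (by simp [hj])]
          omega
        have hv1m : v1 m = v m := Function.update_of_ne (Ne.symm hjm) _ _
        have hFv1 : Fv v1 := by
          refine ih v1 hcard1 m (by rw [hv1m]; exact hm) (fun k hk hkm => ?_)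
            (by rw [hv1m]; exact hvm)
          refine hbeats k ?_ hkm
          by_cases hkj : k = j
          · subst hkj
            exact absurd (Function.update_self k _ v) hk
          · rwa [hv1, Function.update_of_ne hkj] at hk
        by_cases hjd : v j = dirO j
        · refine F2 v v1 (unitO j (dirO j)) (fun l => ?_) hFv1 (hFdir j)
          by_cases hlj : l = j
          · subst hlj
            rw [show v1 l = Ordering.eq from Function.update_self _ _ _,
              show unitO l (dirO l) l = dirO l from if_pos rfl, hjd]
            exact adm2 _
          · rw [show v1 l = v l from Function.update_of_ne hlj _ _,
              show unitO j (dirO j) l = Ordering.eq from if_neg hlj]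
            exact adm1 _
        · have hswp : v j = (dirO j).swap := ordering_resolve _ _ hj (hdir_ne j) hjd
          refine F2 v v1 (wv m j) (fun l => ?_) hFv1 (hbeats j hj hjm)
          by_cases hlm : l = m
          · subst hlm
            have e1 : v1 l = v l := Function.update_of_ne (Ne.symm hjm) _ _
            have e2 : wv l j l = dirO l := by simp [hwvdef]
            rw [e1, e2, hvm]
            exact adm5 _
          · by_cases hlj : l = j
            · subst hlj
              have e1 : v1 l = .eq := Function.update_self _ _ _
              have e2 : wv m l l = (dirO l).swap := by simp [hwvdef, hjm]
              rw [e1, e2, hswp]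
              exact adm2 _
            · have e1 : v1 l = v l := Function.update_of_ne hlj _ _
              have e2 : wv m j l = .eq := by simp [hwvdef, hlm, hlj]
              rw [e1, e2]
              exact adm1 _
  have hmainIff : ∀ v : Fin d → Ordering, ∀ m, v m ≠ .eq →
      (∀ k, v k ≠ .eq → k ≠ m → Beats m k) → (Fv v ↔ v m = dirO m) := by
    intro v m hm hb
    by_cases hvm : v m = dirO m
    · exact iff_of_true (hstepF _ v le_rfl m hm hb hvm) hvm
    · have hswpm : (fun i => (v i).swap) m = dirO m := by
        show (v m).swap = dirO m
        rw [ordering_resolve _ _ hm (hdir_ne m) hvm, Ordering.swap_swap]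
      have hsw : Fv (fun i => (v i).swap) := by
        refine hstepF _ _ le_rfl m ?_ (fun k hk hkm => ?_) hswpm
        · show (v m).swap ≠ .eq
          exact fun h => hm ((ordering_swap_eq_iff _).1 h)
        · refine hb k ?_ hkm
          exact fun h => hk (by show (v k).swap = _; rw [h]; rfl)
      exact iff_of_false (fun h => ((F1 v ⟨m, hm⟩).1 hsw) h) hvm
  -- the permutation
  have hperm : ∃ σ : Equiv.Perm (Fin d), ∀ i j : Fin d, i < j → Beats (σ i) (σ j) := by
    set rank : Fin d → ℕ :=
      fun i => (Finset.univ.filter (fun k => k ≠ i ∧ Beats k i)).card with hrank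
    have hmono : ∀ x y : Fin d, x ≠ y → Beats x y → rank x < rank y := by
      intro x y hxy hB
      simp only [hrank]
      have hsub : insert x (Finset.univ.filter (fun k => k ≠ x ∧ Beats k x))
          ⊆ Finset.univ.filter (fun k => k ≠ y ∧ Beats k y) := by
        intro k hk
        rcases Finset.mem_insert.1 hk with rfl | hk
        · simp only [Finset.mem_filter, Finset.mem_univ, true_and]
          exact ⟨hxy, hB⟩
        · simp only [Finset.mem_filter, Finset.mem_univ, true_and] at hk ⊢
          obtain ⟨hkx, hBkx⟩ := hk
          have hky : k ≠ y := by
            rintro rfl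
            exact ((hBtot x k hxy).1 hBkx) hB
          exact ⟨hky, hBtrans k x y hkx hxy hky hBkx hB⟩
      have hxmem : x ∉ Finset.univ.filter (fun k => k ≠ x ∧ Beats k x) := by simp
      have hcc := Finset.card_le_card hsub
      rw [Finset.card_insert_of_notMem hxmem] at hcc
      omega
    have hlt : ∀ i, rank i < d := by
      intro i
      simp only [hrank]
      have hsub : Finset.univ.filter (fun k => k ≠ i ∧ Beats k i)
          ⊆ Finset.univ.erase i := by
        intro k hk
        simp only [Finset.mem_filter, Finset.mem_univ, true_and] at hk
        exact Finset.mem_erase.2 ⟨hk.1, Finset.mem_univ k⟩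
      have h1 := Finset.card_le_card hsub
      have h2 : (Finset.univ.erase i).card = d - 1 := by
        rw [Finset.card_erase_of_mem (Finset.mem_univ i), Finset.card_univ, Fintype.card_fin]
      omega
    set f : Fin d → Fin d := fun i => ⟨rank i, hlt i⟩ with hf
    have hinj : Function.Injective f := by
      intro x y hxy
      by_contra hne
      have h1 : rank x = rank y := by
        have h0 := congrArg Fin.val hxy
        simpa [hf] using h0
      by_cases hB : Beats x y
      · exact absurd h1 (Nat.ne_of_lt (hmono x y hne hB))
      · have hB2 : Beats y x := (hBtot x y hne).2 hB
        exact absurd h1.symm (Nat.ne_of_lt (hmono y x (Ne.symm hne) hB2))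
    have hbij := Finite.injective_iff_bijective.1 hinj
    set e := Equiv.ofBijective f hbij with he
    refine ⟨e.symm, ?_⟩
    intro i j hij
    have hri : rank (e.symm i) = (i : ℕ) := congrArg Fin.val (e.apply_symm_apply i)
    have hrj : rank (e.symm j) = (j : ℕ) := congrArg Fin.val (e.apply_symm_apply j)
    have hne : e.symm i ≠ e.symm j := fun h => hij.ne (e.symm.injective h)
    by_contra hB
    have hB2 : Beats (e.symm j) (e.symm i) := (hBtot _ _ hne).2 hB
    have hlt2 := hmono _ _ (Ne.symm hne) hB2
    rw [hri, hrj] at hlt2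
    have hij' : (i : ℕ) < (j : ℕ) := hij
    omega
  obtain ⟨σ, hσ⟩ := hperm
  refine ⟨σ, fun j => R (σ j), ?_⟩
  intro a b
  by_cases hab : a = b
  · subst hab
    refine iff_of_false (hirrefl a) ?_
    rintro ⟨j, _, hj⟩
    split_ifs at hj <;> exact absurd hj (lt_irrefl _)
  · set v : Fin d → Ordering := fun i => cmp (a.1 i) (b.1 i) with hvdef
    have hvne : ∃ i, v i ≠ .eq := by
      have hne : a.1 ≠ b.1 := fun h => hab (Subtype.ext h)
      obtain ⟨i, hi⟩ := Function.ne_iff.1 hne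
      exact ⟨i, fun h => hi ((cmp_eq_eq_iff _ _).1 h)⟩
    set T := Finset.univ.filter (fun jj : Fin d => v (σ jj) ≠ Ordering.eq) with hTdef
    have hTne : T.Nonempty := by
      obtain ⟨i, hi⟩ := hvne
      refine ⟨σ.symm i, ?_⟩
      simp only [hTdef, Finset.mem_filter, Finset.mem_univ, true_and,
        Equiv.apply_symm_apply]
      exact hi
    set j₀ := T.min' hTne with hj₀def
    have hj₀T : v (σ j₀) ≠ .eq := by
      have := T.min'_mem hTne
      simp only [hTdef, Finset.mem_filter, Finset.mem_univ, true_and] at this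
      exact this
    have hlow : ∀ i, i < j₀ → v (σ i) = .eq := by
      intro i hi
      by_contra h
      exact absurd (T.min'_le i (by
        simp only [hTdef, Finset.mem_filter, Finset.mem_univ, true_and]; exact h))
        (not_le.2 hi)
    have hmax : ∀ k, v k ≠ .eq → k ≠ σ j₀ → Beats (σ j₀) k := by
      intro k hk hkm
      have h1 : σ.symm k ∈ T := by
        simp only [hTdef, Finset.mem_filter, Finset.mem_univ, true_and,
          Equiv.apply_symm_apply]
        exact hk
      have h2 : j₀ ≤ σ.symm k := T.min'_le _ h1
      have h3 : j₀ ≠ σ.symm k := by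
        intro h
        exact hkm (by rw [h, Equiv.apply_symm_apply])
      have h4 := hσ j₀ (σ.symm k) (lt_of_le_of_ne h2 h3)
      rwa [Equiv.apply_symm_apply] at h4
    have hFveq : prec a b ↔ v (σ j₀) = dirO (σ j₀) := by
      rw [keyFv a b]
      exact hmainIff v (σ j₀) hj₀T hmax
    rw [hFveq]
    constructor
    · intro hm
      refine ⟨j₀, fun i hi => ?_, ?_⟩
      · exact (cmp_eq_eq_iff _ _).1 (hlow i hi)
      · split_ifs with hR
        · have hd1 : dirO (σ j₀) = .lt := by simp [hdirdef, hR]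
          rw [hd1] at hm
          exact (cmp_eq_lt_iff _ _).1 hm
        · have hd1 : dirO (σ j₀) = .gt := by simp [hdirdef, hR]
          rw [hd1] at hm
          exact (cmp_eq_gt_iff _ _).1 hm
    · rintro ⟨j, hje, hjl⟩
      have hjT : j ∈ T := by
        simp only [hTdef, Finset.mem_filter, Finset.mem_univ, true_and]
        intro hcon
        have heq2 : a.1 (σ j) = b.1 (σ j) := (cmp_eq_eq_iff _ _).1 hcon
        revert hjl
        split_ifs with hR
        · intro h
          rw [heq2] at h
          exact lt_irrefl _ h
        · intro h
          rw [← heq2] at h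
          exact lt_irrefl _ h
      have hj₀j : j₀ ≤ j := T.min'_le _ hjT
      have hjj : j = j₀ := by
        by_contra hne2
        have hlt : j₀ < j := lt_of_le_of_ne hj₀j (fun h => hne2 h.symm)
        exact hj₀T ((cmp_eq_eq_iff _ _).2 (hje j₀ hlt))
      subst hjj
      split_ifs at hjl with hR
      · have hd1 : dirO (σ j₀) = .lt := by simp [hdirdef, hR]
        rw [hd1]
        exact (cmp_eq_lt_iff _ _).2 hjl
      · have hd1 : dirO (σ j₀) = .gt := by simp [hdirdef, hR]
        rw [hd1]
        exact (cmp_eq_gt_iff _ _).2 hjl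
end

section
/- Let S and T be disjoint subsets of ℚ with S ∪ T = ℚ, such that both S and T are dense in (ℚ,<): every nonempty open interval of ℚ meets S and meets T. Let n ≥ 1 and let λ : ℚ → {1,…,n} be a colouring such that no colour is taken both on S and on T (the image λ(S) is disjoint from the image λ(T)). Then there exist rationals a < b and colours s ∈ λ(S), t ∈ λ(T) such that λ⁻¹(s) and λ⁻¹(t) are both dense in the open interval (a,b), i.e., each of them meets every nonempty open subinterval of (a,b). -/
open Classical in
lemma dense_colours_aux (n : ℕ) (lam : ℚ → Fin n) :
    ∀ k : ℕ, ∀ a b : ℚ, a < b →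
      (Finset.univ.filter (fun c : Fin n => ∃ z, a < z ∧ z < b ∧ lam z = c)).card ≤ k →
      ∃ a' b', a ≤ a' ∧ a' < b' ∧ b' ≤ b ∧
        ∀ c : Fin n, (∃ z, a' < z ∧ z < b' ∧ lam z = c) →
          ∀ u v : ℚ, a' ≤ u → u < v → v ≤ b' → ∃ z, u < z ∧ z < v ∧ lam z = c := by
  intro k
  induction k with
  | zero =>
    intro a b hab hcard
    refine ⟨a, b, le_refl a, hab, le_refl b, ?_⟩
    intro c hc u v _ _ _
    obtain ⟨z, hz1, hz2, hz3⟩ := hc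
    exfalso
    have hmem : c ∈ Finset.univ.filter (fun c : Fin n => ∃ z, a < z ∧ z < b ∧ lam z = c) := by
      simp only [Finset.mem_filter, Finset.mem_univ, true_and]
      exact ⟨z, hz1, hz2, hz3⟩
    have := Finset.card_pos.mpr ⟨c, hmem⟩
    omega
  | succ k ih =>
    intro a b hab hcard
    by_cases h : ∀ c : Fin n, (∃ z, a < z ∧ z < b ∧ lam z = c) →
        ∀ u v : ℚ, a ≤ u → u < v → v ≤ b → ∃ z, u < z ∧ z < v ∧ lam z = c
    · exact ⟨a, b, le_refl a, hab, le_refl b, h⟩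
    · push_neg at h
      obtain ⟨c, hc, u, v, hau, huv, hvb, hno⟩ := h
      have hcmem : c ∈ Finset.univ.filter (fun c : Fin n => ∃ z, a < z ∧ z < b ∧ lam z = c) := by
        simp only [Finset.mem_filter, Finset.mem_univ, true_and]
        exact hc
      have hsub : (Finset.univ.filter (fun c : Fin n => ∃ z, u < z ∧ z < v ∧ lam z = c)) ⊆
          (Finset.univ.filter (fun c : Fin n => ∃ z, a < z ∧ z < b ∧ lam z = c)) \ {c} := by
        intro c' hc'
        simp only [Finset.mem_filter, Finset.mem_univ, true_and] at hc'
        obtain ⟨z, hz1, hz2, hz3⟩ := hc'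
        simp only [Finset.mem_sdiff, Finset.mem_filter, Finset.mem_univ, true_and,
          Finset.mem_singleton]
        refine ⟨⟨z, lt_of_le_of_lt hau hz1, lt_of_lt_of_le hz2 hvb, hz3⟩, ?_⟩
        rintro rfl
        exact hno z hz1 hz2 hz3
      have hcard' :
          (Finset.univ.filter (fun c : Fin n => ∃ z, u < z ∧ z < v ∧ lam z = c)).card ≤ k := by
        have h1 := Finset.card_le_card hsub
        have h2 := Finset.card_sdiff_of_subset (Finset.singleton_subset_iff.mpr hcmem)
        have h3 := Finset.card_pos.mpr ⟨c, hcmem⟩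
        simp only [Finset.card_singleton] at h2
        omega
      obtain ⟨a', b', h1, h2, h3, h4⟩ := ih u v huv hcard'
      exact ⟨a', b', hau.trans h1, h2, h3.trans hvb, h4⟩

/-- If ℚ is partitioned into two dense sets `S` and `T`, and `lam` is a finite colouring of ℚ
in which no colour occurs both on `S` and on `T`, then there is a nonempty open interval
`(a, b)` and colours `s` (occurring on `S`) and `t` (occurring on `T`) whose colour classes
are both dense in `(a, b)`. -/
theorem dense_colours_exist (S T : Set ℚ) (hdisj : Disjoint S T)
    (hunion : S ∪ T = Set.univ)
    (hSdense : ∀ a b : ℚ, a < b → ∃ x ∈ S, a < x ∧ x < b)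
    (hTdense : ∀ a b : ℚ, a < b → ∃ x ∈ T, a < x ∧ x < b)
    (n : ℕ) (hn : 1 ≤ n) (lam : ℚ → Fin n)
    (hsep : ∀ x ∈ S, ∀ y ∈ T, lam x ≠ lam y) :
    ∃ a b : ℚ, a < b ∧ ∃ s t : Fin n,
      (∃ x ∈ S, lam x = s) ∧ (∃ y ∈ T, lam y = t) ∧
      (∀ u v : ℚ, a ≤ u → u < v → v ≤ b → ∃ z, u < z ∧ z < v ∧ lam z = s) ∧
      (∀ u v : ℚ, a ≤ u → u < v → v ≤ b → ∃ z, u < z ∧ z < v ∧ lam z = t) := by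
  classical
  have hcard : (Finset.univ.filter (fun c : Fin n => ∃ z, (0:ℚ) < z ∧ z < 1 ∧ lam z = c)).card
      ≤ n := by
    calc _ ≤ (Finset.univ : Finset (Fin n)).card := Finset.card_filter_le _ _
    _ = n := by simp
  obtain ⟨a, b, _, hab, _, hdense⟩ :=
    dense_colours_aux n lam n 0 1 (by norm_num) hcard
  obtain ⟨x, hxS, hx1, hx2⟩ := hSdense a b hab
  obtain ⟨y, hyT, hy1, hy2⟩ := hTdense a b hab
  refine ⟨a, b, hab, lam x, lam y, ⟨x, hxS, rfl⟩, ⟨y, hyT, rfl⟩, ?_, ?_⟩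
  · exact hdense (lam x) ⟨x, hx1, hx2, rfl⟩
  · exact hdense (lam y) ⟨y, hy1, hy2, rfl⟩
end

section
/- Let 𝕊 be a dense subset of the circle ℝ/2πℤ containing no two antipodal points: for all x, y ∈ 𝕊, y ≠ x + π. For distinct a, b ∈ 𝕊 write a ≺ b if the counterclockwise arc from a to b has length less than π, i.e., b − a is the image of a real number in the open interval (0,π); since 𝕊 has no antipodal points, exactly one of a ≺ b, b ≺ a holds for distinct a,b. Define Betw = {(x,y,z) ∈ 𝕊³ : (x ≺ y and y ≺ z) or (z ≺ y and y ≺ x)}. Then every bijection α : 𝕊 → 𝕊 such that for all x,y,z ∈ 𝕊, (x,y,z) ∈ Betw iff (α(x),α(y),α(z)) ∈ Betw, satisfies either: for all distinct a,b ∈ 𝕊, a ≺ b iff α(a) ≺ α(b) (α is an automorphism of (𝕊;≺)), or: for all distinct a,b ∈ 𝕊, a ≺ b iff α(b) ≺ α(a) (α is an anti-automorphism of (𝕊;≺)). -/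
/-- The cyclic order relation on the circle `ℝ/2πℤ`: `a ≺ b` iff the counterclockwise arc
from `a` to `b` has length less than `π`, i.e., `b - a` is the image of a real number in
the open interval `(0, π)`. -/
def circPrec (a b : Real.Angle) : Prop :=
  ∃ r : ℝ, 0 < r ∧ r < Real.pi ∧ b - a = (r : Real.Angle)

/-- The betweenness relation derived from `≺`. -/
def circBetw (x y z : Real.Angle) : Prop :=
  (circPrec x y ∧ circPrec y z) ∨ (circPrec z y ∧ circPrec y x)

lemma circPrec_asymm {a b : Real.Angle} (h1 : circPrec a b) (h2 : circPrec b a) : False := by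
  obtain ⟨r, hr0, hrp, hr⟩ := h1
  obtain ⟨s, hs0, hsp, hs⟩ := h2
  have h : ((r + s : ℝ) : Real.Angle) = ((0 : ℝ) : Real.Angle) := by
    rw [Real.Angle.coe_add, ← hr, ← hs, Real.Angle.coe_zero]; abel
  rw [Real.Angle.angle_eq_iff_two_pi_dvd_sub] at h
  obtain ⟨k, hk⟩ := h
  rw [sub_zero] at hk
  have hpi := Real.pi_pos
  rcases le_or_gt k 0 with hk0 | hk0
  · have : (k : ℝ) ≤ 0 := by exact_mod_cast hk0
    nlinarith
  · have : (1 : ℝ) ≤ (k : ℝ) := by exact_mod_cast hk0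
    nlinarith

lemma circPrec_total {a b : Real.Angle} (hne : b ≠ a)
    (hpi : b - a ≠ ((Real.pi : ℝ) : Real.Angle)) :
    circPrec a b ∨ circPrec b a := by
  set θ := (b - a).toReal with hθdef
  have hmem := Real.Angle.toReal_mem_Ioc (b - a)
  have hcoe : ((θ : ℝ) : Real.Angle) = b - a := Real.Angle.coe_toReal _
  have hθ0 : θ ≠ 0 := by
    intro h
    exact hne (sub_eq_zero.mp (Real.Angle.toReal_eq_zero_iff.mp h))
  have hθπ : θ ≠ Real.pi := by
    intro h
    exact hpi (Real.Angle.toReal_eq_pi_iff.mp h)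
  rcases lt_trichotomy θ 0 with h | h | h
  · right
    refine ⟨-θ, by linarith, by linarith [hmem.1], ?_⟩
    rw [Real.Angle.coe_neg, hcoe]; abel
  · exact absurd h hθ0
  · left
    exact ⟨θ, h, lt_of_le_of_ne hmem.2 hθπ, hcoe.symm⟩

lemma circPrec_irrefl (a : Real.Angle) : ¬ circPrec a a :=
  fun h => circPrec_asymm h h

lemma isOpen_arc (a : Real.Angle) : IsOpen {y : Real.Angle | circPrec y a} := by
  have himg : IsOpen ((fun r : ℝ => (r : Real.Angle)) '' Set.Ioo 0 Real.pi) :=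
    QuotientAddGroup.isOpenMap_coe _ isOpen_Ioo
  have heq : {y : Real.Angle | circPrec y a}
      = (fun y : Real.Angle => a - y) ⁻¹' ((fun r : ℝ => (r : Real.Angle)) '' Set.Ioo 0 Real.pi) := by
    ext y
    constructor
    · rintro ⟨r, h0, hp, he⟩; exact ⟨r, ⟨h0, hp⟩, he.symm⟩
    · rintro ⟨r, ⟨h0, hp⟩, he⟩; exact ⟨r, h0, hp, he.symm⟩
  rw [heq]
  exact himg.preimage (continuous_const.sub continuous_id)

lemma isOpen_arc' (a : Real.Angle) : IsOpen {y : Real.Angle | circPrec a y} := by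
  have himg : IsOpen ((fun r : ℝ => (r : Real.Angle)) '' Set.Ioo 0 Real.pi) :=
    QuotientAddGroup.isOpenMap_coe _ isOpen_Ioo
  have heq : {y : Real.Angle | circPrec a y}
      = (fun y : Real.Angle => y - a) ⁻¹' ((fun r : ℝ => (r : Real.Angle)) '' Set.Ioo 0 Real.pi) := by
    ext y
    constructor
    · rintro ⟨r, h0, hp, he⟩; exact ⟨r, ⟨h0, hp⟩, he.symm⟩
    · rintro ⟨r, ⟨h0, hp⟩, he⟩; exact ⟨r, h0, hp, he.symm⟩
  rw [heq]
  exact himg.preimage (continuous_id.sub continuous_const)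

lemma arc_nonempty (a : Real.Angle) : {y : Real.Angle | circPrec y a}.Nonempty := by
  have hpi := Real.pi_pos
  refine ⟨a - ((Real.pi / 2 : ℝ) : Real.Angle), Real.pi / 2, by linarith, by linarith, ?_⟩
  abel

lemma arc_nonempty' (a : Real.Angle) : {y : Real.Angle | circPrec a y}.Nonempty := by
  have hpi := Real.pi_pos
  refine ⟨a + ((Real.pi / 2 : ℝ) : Real.Angle), Real.pi / 2, by linarith, by linarith, ?_⟩
  abel

/-- If `𝕊` is a dense subset of the circle without antipodal points, then every bijection of
`𝕊` preserving the betweenness relation `Betw` (in both directions) is an automorphism or an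
anti-automorphism of `(𝕊; ≺)`. -/
theorem betweenness_preserving_is_auto_or_antiauto
    (S : Set Real.Angle) (hdense : Dense S)
    (hanti : ∀ x ∈ S, ∀ y ∈ S, y ≠ x + ((Real.pi : ℝ) : Real.Angle))
    (α : S ≃ S)
    (hα : ∀ x y z : S, circBetw x.1 y.1 z.1 ↔ circBetw (α x).1 (α y).1 (α z).1) :
    (∀ a b : S, a ≠ b → (circPrec a.1 b.1 ↔ circPrec (α a).1 (α b).1)) ∨
    (∀ a b : S, a ≠ b → (circPrec a.1 b.1 ↔ circPrec (α b).1 (α a).1)) := by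
  classical
  -- totality on S
  have total : ∀ a b : S, a ≠ b → circPrec a.1 b.1 ∨ circPrec b.1 a.1 := by
    intro a b hne
    refine circPrec_total (fun h => hne (Subtype.ext h.symm)) ?_
    intro h
    exact hanti a.1 a.2 b.1 b.2 (by rw [← h]; abel)
  have flip : ∀ a b : S, a ≠ b → (circPrec b.1 a.1 ↔ ¬ circPrec a.1 b.1) := by
    intro a b hne
    constructor
    · exact fun h1 h2 => circPrec_asymm h2 h1
    · intro h
      rcases total a b hne with h' | h'
      · exact absurd h' h
      · exact h'
  -- the "sign" of a pair
  set Same : S → S → Prop :=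
    fun a b => (circPrec a.1 b.1 ↔ circPrec (α a).1 (α b).1) with hSame
  -- the key consequence of betweenness preservation
  have K : ∀ x y z : S, circPrec x.1 y.1 → circPrec y.1 z.1 → (Same x y ↔ Same y z) := by
    intro x y z hxy hyz
    have hB : circBetw x.1 y.1 z.1 := Or.inl ⟨hxy, hyz⟩
    rcases (hα x y z).mp hB with ⟨h1, h2⟩ | ⟨h1, h2⟩
    · exact iff_of_true (iff_of_true hxy h1) (iff_of_true hyz h2)
    · refine iff_of_false ?_ ?_
      · exact fun hs => circPrec_asymm (hs.mp hxy) h2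
      · exact fun hs => circPrec_asymm (hs.mp hyz) h1
  -- density picks
  have pickL : ∀ a : Real.Angle, ∃ x : S, circPrec x.1 a := by
    intro a
    obtain ⟨x, hxS, hxU⟩ := hdense.exists_mem_open (isOpen_arc a) (arc_nonempty a)
    exact ⟨⟨x, hxS⟩, hxU⟩
  have pickR : ∀ a : Real.Angle, ∃ x : S, circPrec a x.1 := by
    intro a
    obtain ⟨x, hxS, hxU⟩ := hdense.exists_mem_open (isOpen_arc' a) (arc_nonempty' a)
    exact ⟨⟨x, hxS⟩, hxU⟩
  -- shared left endpoint
  have C1 : ∀ a b c : S, circPrec a.1 b.1 → circPrec a.1 c.1 → (Same a b ↔ Same a c) := by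
    intro a b c hab hac
    obtain ⟨x, hx⟩ := pickL a.1
    exact (K x a b hx hab).symm.trans (K x a c hx hac)
  -- oriented constancy
  have C' : ∀ a b c d : S, circPrec a.1 b.1 → circPrec c.1 d.1 → (Same a b ↔ Same c d) := by
    intro a b c d hab hcd
    by_cases hac : a = c
    · subst hac; exact C1 a b d hab hcd
    · rcases total a c hac with h | h
      · exact (C1 a b c hab h).trans (K a c d h hcd)
      · exact (K c a b h hab).symm.trans (C1 c a d h hcd)
  -- symmetry of Same
  have sym : ∀ a b : S, a ≠ b → (Same a b ↔ Same b a) := by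
    intro a b hne
    have hne' : α a ≠ α b := fun e => hne (α.injective e)
    have h1 := flip a b hne
    have h2 := flip (α a) (α b) hne'
    simp only [hSame]
    rw [h1, h2]
    exact not_iff_not.symm
  -- full constancy
  have C : ∀ a b c d : S, a ≠ b → c ≠ d → (Same a b ↔ Same c d) := by
    intro a b c d hne hcd
    rcases total a b hne with hab | hba <;> rcases total c d hcd with h1 | h2
    · exact C' a b c d hab h1
    · exact (C' a b d c hab h2).trans (sym d c (Ne.symm hcd))
    · exact (sym a b hne).trans (C' b a c d hba h1)
    · exact ((sym a b hne).trans (C' b a d c hba h2)).trans (sym d c (Ne.symm hcd))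
  by_cases hall : ∀ a b : S, a ≠ b → Same a b
  · exact Or.inl hall
  · right
    push_neg at hall
    obtain ⟨a, b, hne, hnot⟩ := hall
    intro c d hcd
    have hnot' : ¬ Same c d := fun hs => hnot ((C a b c d hne hcd).mpr hs)
    have hne' : α c ≠ α d := fun e => hcd (α.injective e)
    have h2 := flip (α c) (α d) hne'
    rw [h2]
    tauto
end
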